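/- Let F be a bi-atomic distribution on {a, b} with a < b. The following are equivalent: (i) F ≺cx U[0,1]; (ii) b − a ≤ 1/2 and the mean of F is 1/2. -/

import Mathlib

open MeasureTheory ProbabilityTheory Set

/-- The uniform distribution on `[a, b]`. -/
noncomputable def unif (a b : ℝ) : Measure ℝ :=
  (ENNReal.ofReal (b - a))⁻¹ • (volume.restrict (Set.Icc a b))

/-- `F` is smaller than `G` in convex order. -/
def ConvexOrder (F G : Measure ℝ) : Prop :=
  ∀ φ : ℝ → ℝ, ConvexOn ℝ Set.univ φ → Integrable φ F → Integrable φ G →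
    ∫ x, φ x ∂F ≤ ∫ x, φ x ∂G

/-- The set of possible distributions of `X 1 + ... + X n` with `X i ~ Fs i`. -/
def Dset (n : ℕ) (Fs : Fin n → Measure ℝ) : Set (Measure ℝ) :=
  {G | ∃ (Ω : Type) (_ : MeasureSpace Ω),
    IsProbabilityMeasure (ℙ : Measure Ω) ∧
    ∃ X : Fin n → Ω → ℝ, (∀ i, Measurable (X i)) ∧
      (∀ i, Measure.map (X i) ℙ = Fs i) ∧
      Measure.map (fun ω => ∑ i, X i ω) ℙ = G}

/-- The quantile (left-continuous inverse cdf) of a distribution. -/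
noncomputable def quantile (F : Measure ℝ) (t : ℝ) : ℝ :=
  sInf {x : ℝ | t ≤ (F (Set.Iic x)).toReal}

/-- `F` is the distribution of `X + Y` for some `X ~ μ`, `Y ~ ν`. -/
def IsSumDist (μ ν F : Measure ℝ) : Prop :=
  ∃ (Ω : Type) (_ : MeasureSpace Ω), IsProbabilityMeasure (ℙ : Measure Ω) ∧
    ∃ X Y : Ω → ℝ, Measurable X ∧ Measurable Y ∧
      Measure.map X ℙ = μ ∧ Measure.map Y ℙ = ν ∧
      Measure.map (fun ω => X ω + Y ω) ℙ = F

/-!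
Convex order forces equal means, and testing against the stop-loss function `(x - p)⁺` gives
`(1 - p)(b - p) ≤ (1 - p)² / 2`, i.e. `b ≤ (1 + p) / 2`; with the mean equation this is
`b - a ≤ 1 / 2`. Conversely, under these conditions the interval `[a - p/2, a + p/2]` lies in
`[0, 1]`, has length `p` and midpoint `a`, so its complement in `[0, 1]` has mass `1 - p` and
mean `b`. Jensen's inequality on each of the two cells then gives `F ≺cx U[0,1]`.
-/

noncomputable def biatomic (p a b : ℝ) : Measure ℝ :=
  ENNReal.ofReal p • Measure.dirac a + ENNReal.ofReal (1 - p) • Measure.dirac b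

lemma integrable_biatomic (f : ℝ → ℝ) (p a b : ℝ) : Integrable f (biatomic p a b) :=
  ((integrable_dirac enorm_lt_top).smul_measure ENNReal.ofReal_ne_top).add_measure
    ((integrable_dirac enorm_lt_top).smul_measure ENNReal.ofReal_ne_top)

lemma integral_biatomic (f : ℝ → ℝ) {p : ℝ} (hp0 : 0 ≤ p) (hp1 : p ≤ 1) (a b : ℝ) :
    ∫ x, f x ∂biatomic p a b = p * f a + (1 - p) * f b := by
  rw [biatomic, integral_add_measure
    ((integrable_dirac enorm_lt_top).smul_measure ENNReal.ofReal_ne_top)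
    ((integrable_dirac enorm_lt_top).smul_measure ENNReal.ofReal_ne_top),
    integral_smul_measure, integral_smul_measure, integral_dirac, integral_dirac,
    ENNReal.toReal_ofReal hp0, ENNReal.toReal_ofReal (sub_nonneg.2 hp1), smul_eq_mul, smul_eq_mul]

lemma setIntegral_Icc_id {l r : ℝ} (h : l ≤ r) : ∫ x in Icc l r, x = (r ^ 2 - l ^ 2) / 2 := by
  rw [integral_Icc_eq_integral_Ioc, ← intervalIntegral.integral_of_le h, integral_id]

lemma unif_zero_one : unif 0 1 = volume.restrict (Icc 0 1) := by
  simp [unif]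

instance : IsProbabilityMeasure (unif 0 1) :=
  unif_zero_one ▸ ⟨by simp⟩

lemma Continuous.integrable_unif_zero_one {f : ℝ → ℝ} (hf : Continuous f) :
    Integrable f (unif 0 1) :=
  unif_zero_one ▸ hf.integrableOn_Icc

lemma integral_unif_zero_one_id : ∫ x, x ∂unif 0 1 = 1 / 2 := by
  rw [unif_zero_one, setIntegral_Icc_id zero_le_one]
  norm_num

lemma integral_unif_zero_one_max_sub {t : ℝ} (ht0 : 0 ≤ t) (ht1 : t ≤ 1) :
    ∫ x, max (x - t) 0 ∂unif 0 1 = (1 - t) ^ 2 / 2 := by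
  have hcont : Continuous fun x : ℝ => max (x - t) 0 :=
    (continuous_sub_right t).max continuous_const
  rw [unif_zero_one, integral_Icc_eq_integral_Ioc, ← intervalIntegral.integral_of_le zero_le_one,
    ← intervalIntegral.integral_add_adjacent_intervals (b := t)
      (hcont.intervalIntegrable _ _) (hcont.intervalIntegrable _ _)]
  have h_left : ∫ x in (0 : ℝ)..t, max (x - t) 0 = ∫ _ in (0 : ℝ)..t, (0 : ℝ) :=
    intervalIntegral.integral_congr fun x hx => by
      rw [uIcc_of_le ht0] at hx
      exact max_eq_right (by linarith [hx.2])
  have h_right : ∫ x in t..1, max (x - t) 0 = ∫ x in t..1, (x - t) :=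
    intervalIntegral.integral_congr fun x hx => by
      rw [uIcc_of_le ht1] at hx
      exact max_eq_left (by linarith [hx.1])
  rw [h_left, h_right, intervalIntegral.integral_sub intervalIntegral.intervalIntegrable_id
    intervalIntegrable_const, integral_id, intervalIntegral.integral_const,
    intervalIntegral.integral_const, smul_eq_mul, smul_eq_mul]
  ring

lemma ConvexOrder.integral_id_eq {F G : Measure ℝ} (h : ConvexOrder F G)
    (hF : Integrable (fun x => x) F) (hG : Integrable (fun x => x) G) :
    ∫ x, x ∂F = ∫ x, x ∂G := by
  have h_neg := h (fun x => -x) (concaveOn_id convex_univ).neg hF.neg hG.neg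
  rw [integral_neg, integral_neg] at h_neg
  exact le_antisymm (h (fun x => x) (convexOn_id convex_univ) hF hG) (neg_le_neg_iff.1 h_neg)

lemma ConvexOn.measureReal_mul_map_setAverage_le {φ : ℝ → ℝ} (hφ : ConvexOn ℝ univ φ)
    {μ : Measure ℝ} {t : Set ℝ} (h0 : μ t ≠ 0) (ht : μ t ≠ ⊤)
    (hid : IntegrableOn (fun x => x) t μ) (hφi : IntegrableOn φ t μ) :
    μ.real t * φ (⨍ x in t, x ∂μ) ≤ ∫ x in t, φ x ∂μ := by
  have jensen := hφ.map_set_average_le hφ.locallyLipschitz.continuous.continuousOn isClosed_univ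
    h0 ht (Filter.Eventually.of_forall fun _ => mem_univ _) hid hφi
  rw [← smul_eq_mul, ← measure_smul_setAverage _ ht]
  exact smul_le_smul_of_nonneg_left jensen measureReal_nonneg

lemma convexOrder_biatomic_of_setAverage {G : Measure ℝ} [IsProbabilityMeasure G] {s : Set ℝ}
    (hs : MeasurableSet s) (hs0 : G s ≠ 0) (hsc0 : G sᶜ ≠ 0) (hid : Integrable (fun x => x) G) :
    ConvexOrder (biatomic (G.real s) (⨍ x in s, x ∂G) (⨍ x in sᶜ, x ∂G)) G := by
  intro φ hφ _ hφG
  have jensen_s := hφ.measureReal_mul_map_setAverage_le hs0 (measure_ne_top G s)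
    hid.integrableOn hφG.integrableOn
  have jensen_sc := hφ.measureReal_mul_map_setAverage_le hsc0 (measure_ne_top G sᶜ)
    hid.integrableOn hφG.integrableOn
  rw [probReal_compl_eq_one_sub hs] at jensen_sc
  rw [integral_biatomic φ measureReal_nonneg measureReal_le_one, ← integral_add_compl hs hφG]
  exact add_le_add jensen_s jensen_sc

lemma ConvexOrder.spread_le_and_mean_eq_of_biatomic_unif {p a b : ℝ} (hp : 0 < p) (hp1 : p < 1)
    (h : ConvexOrder (biatomic p a b) (unif 0 1)) :
    b - a ≤ 1 / 2 ∧ p * a + (1 - p) * b = 1 / 2 := by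
  have hmean : p * a + (1 - p) * b = 1 / 2 := by
    have := h.integral_id_eq (integrable_biatomic _ p a b) continuous_id'.integrable_unif_zero_one
    rwa [integral_biatomic _ hp.le hp1.le, integral_unif_zero_one_id] at this
  have hconvex : ConvexOn ℝ univ fun x : ℝ => max (x - p) 0 :=
    ((convexOn_id convex_univ).sub (concaveOn_const p convex_univ)).sup
      (convexOn_const 0 convex_univ)
  have hstop_loss : p * max (a - p) 0 + (1 - p) * max (b - p) 0 ≤ (1 - p) ^ 2 / 2 := by
    have := h _ hconvex (integrable_biatomic _ p a b)
      ((continuous_sub_right p).max continuous_const).integrable_unif_zero_one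
    rwa [integral_biatomic _ hp.le hp1.le, integral_unif_zero_one_max_sub hp.le hp1.le] at this
  have hb : b ≤ (1 + p) / 2 := by
    nlinarith [le_max_left (b - p) 0, le_max_right (a - p) 0]
  exact ⟨by nlinarith, hmean⟩

lemma convexOrder_biatomic_unif_of_spread_le {p a b : ℝ} (hab : a ≤ b) (hp : 0 < p)
    (hp1 : p < 1) (hspread : b - a ≤ 1 / 2) (hmean : p * a + (1 - p) * b = 1 / 2) :
    ConvexOrder (biatomic p a b) (unif 0 1) := by
  set s := Icc (a - p / 2) (a + p / 2)
  have hsub : s ⊆ Icc 0 1 :=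
    Icc_subset_Icc (by nlinarith [mul_nonneg (sub_nonneg.2 hp1.le) (sub_nonneg.2 hspread)])
      (by nlinarith [mul_nonneg (sub_nonneg.2 hp1.le) (sub_nonneg.2 hab)])
  have hrestrict : (unif 0 1).restrict s = volume.restrict s := by
    rw [unif_zero_one, Measure.restrict_restrict_of_subset hsub]
  have hmass : (unif 0 1).real s = p := by
    rw [measureReal_def, ← Measure.restrict_apply_univ, hrestrict, Measure.restrict_apply_univ,
      Real.volume_Icc, ENNReal.toReal_ofReal (by linarith)]
    ring
  have hint_s : ∫ x in s, x ∂unif 0 1 = p * a := by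
    rw [hrestrict, setIntegral_Icc_id (by linarith)]
    ring
  have hint_sc : ∫ x in sᶜ, x ∂unif 0 1 = (1 - p) * b := by
    have := integral_add_compl measurableSet_Icc continuous_id'.integrable_unif_zero_one
      (μ := unif 0 1) (s := s)
    rw [hint_s, integral_unif_zero_one_id] at this
    linarith
  have hmass_c : (unif 0 1).real sᶜ = 1 - p := by
    rw [probReal_compl_eq_one_sub measurableSet_Icc, hmass]
  have havg_s : ⨍ x in s, x ∂unif 0 1 = a := by
    rw [setAverage_eq, hmass, hint_s, smul_eq_mul]
    field_simp
  have havg_sc : ⨍ x in sᶜ, x ∂unif 0 1 = b := by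
    rw [setAverage_eq, hmass_c, hint_sc, smul_eq_mul]
    field_simp [sub_ne_zero.2 hp1.ne']
  have := convexOrder_biatomic_of_setAverage measurableSet_Icc
    ((measureReal_ne_zero_iff).1 (hmass ▸ hp.ne'))
    ((measureReal_ne_zero_iff).1 (hmass_c ▸ (sub_pos.2 hp1).ne'))
    continuous_id'.integrable_unif_zero_one (G := unif 0 1) (s := s)
  rwa [hmass, havg_s, havg_sc] at this

theorem stmt11 (a b p : ℝ) (hab : a < b) (hp : 0 < p) (hp1 : p < 1)
    (F : Measure ℝ)
    (hF : F = ENNReal.ofReal p • Measure.dirac a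
            + ENNReal.ofReal (1 - p) • Measure.dirac b) :
    ConvexOrder F (unif 0 1) ↔
      (b - a ≤ 1 / 2 ∧ p * a + (1 - p) * b = 1 / 2) := by
  subst hF
  exact ⟨ConvexOrder.spread_le_and_mean_eq_of_biatomic_unif hp hp1,
    fun ⟨hspread, hmean⟩ => convexOrder_biatomic_unif_of_spread_le hab.le hp hp1 hspread hmean⟩
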